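/- For every ν̃ ∈ H₁⁺(μ̃)_{−1} and every n ≥ 0, one has ∑_{z∈𝔷ₙ} (κ-dim(z)/dim(z))·ν̃(z,1) = 1. -/

import Mathlib

open scoped BigOperators Classical ENNReal

universe u

variable {Z : ℕ → Type u}

/-- A path in the branching graph ending at the vertex `z` of level `n`:
it records vertices `z₀,…,zₙ` with `zₙ = z` and `κ(z_{k+1}, z_k) > 0` for all `k`.
(At level `0` the vertex is forced since `Z 0` is a singleton.) -/
structure BPath (κ : ∀ n, Z (n + 1) → Z n → ℝ) {n : ℕ} (z : Z n) where
  pt : ∀ k : Fin (n + 1), Z k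
  last : pt (Fin.last n) = z
  pos : ∀ k : Fin n, 0 < κ k (pt k.succ) (pt k.castSucc)

/-- `dim z`: the number of paths to `z`. -/
noncomputable def bdim (κ : ∀ n, Z (n + 1) → Z n → ℝ) {n : ℕ} (z : Z n) : ℕ :=
  Nat.card (BPath κ z)

/-- The `κ`-dimension `κ-dim(z)`. -/
noncomputable def kdim (κ : ∀ n, Z (n + 1) → Z n → ℝ) {n : ℕ} (z : Z n) : ℝ :=
  Real.sqrt (∑' p : BPath κ z, ∏ k : Fin n, (κ k (p.pt k.succ) (p.pt k.castSucc))⁻¹)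

/-- The weight `ρ(z, z')`. -/
noncomputable def wrho (κ : ∀ n, Z (n + 1) → Z n → ℝ) {n : ℕ} (z : Z (n + 1)) (z' : Z n) : ℝ :=
  kdim κ z * κ n z z' / kdim κ z'

/-- The weight group `Γ(κ)`: the subgroup of `ℝˣ` generated by the positive weights. -/
noncomputable def weightGroup (κ : ∀ n, Z (n + 1) → Z n → ℝ) : Subgroup ℝˣ :=
  Subgroup.closure
    {γ : ℝˣ | ∃ (n : ℕ) (z : Z (n + 1)) (z' : Z n), 0 < κ n z z' ∧ (γ : ℝ) = wrho κ z z'}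

/-- The multiplicity function `m̃` of the weight-extended branching graph. -/
noncomputable def mtilde (κ : ∀ n, Z (n + 1) → Z n → ℝ) {n : ℕ}
    (p : Z (n + 1) × ℝˣ) (p' : Z n × ℝˣ) : ℕ :=
  if 0 < κ n p.1 p'.1 ∧ ((p.2⁻¹ * p'.2 : ℝˣ) : ℝ) = wrho κ p.1 p'.1 then 1 else 0

/-- The standard link `μ̃` of the weight-extended branching graph. -/
noncomputable def mutilde (κ : ∀ n, Z (n + 1) → Z n → ℝ) {n : ℕ}
    (p : Z (n + 1) × ℝˣ) (p' : Z n × ℝˣ) : ℝ :=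
  (mtilde κ p p' : ℝ) * (bdim κ p'.1 : ℝ) / (bdim κ p.1 : ℝ)

/-- `ν ∈ H₁⁺(κ)`: nonnegative, normalized at the root, and `κ`-harmonic
(the defining sums converging). -/
def memH1 (κ : ∀ n, Z (n + 1) → Z n → ℝ) [Unique (Z 0)] (ν : ∀ n, Z n → ℝ) : Prop :=
  (∀ (n : ℕ) (z : Z n), 0 ≤ ν n z) ∧ ν 0 default = 1 ∧
    ∀ (n : ℕ) (z' : Z n), HasSum (fun z : Z (n + 1) => ν (n + 1) z * κ n z z') (ν n z')

/-- `ν̃ ∈ H₁⁺(μ̃)_{−1}`: a nonnegative, normalized, `(−1)`-power scaling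
`μ̃`-harmonic function on the weight-extended branching graph. -/
def memH1T (κ : ∀ n, Z (n + 1) → Z n → ℝ) [Unique (Z 0)]
    (νt : ∀ n, Z n → ↥(weightGroup κ) → ℝ) : Prop :=
  (∀ (n : ℕ) (z : Z n) (γ : ↥(weightGroup κ)), 0 ≤ νt n z γ) ∧
  (∀ (n : ℕ) (z' : Z n) (γ' : ↥(weightGroup κ)),
      HasSum
        (fun p : Z (n + 1) × ↥(weightGroup κ) =>
          νt (n + 1) p.1 p.2 * mutilde κ (p.1, (p.2 : ℝˣ)) (z', (γ' : ℝˣ)))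
        (νt n z' γ')) ∧
  (∀ (n : ℕ) (z : Z n) (γ : ↥(weightGroup κ)), νt n z γ = (((γ : ℝˣ) : ℝ))⁻¹ * νt n z 1) ∧
  νt 0 default 1 = 1


section Aux

variable {κ : ∀ n, Z (n + 1) → Z n → ℝ}

theorem bpath_pt_eq {n : ℕ} {z : Z n} {p q : BPath κ z} (h : p.pt = q.pt) : p = q := by
  cases p; cases q; cases h; rfl

theorem bpath_subsingleton0 (z : Z 0) : Subsingleton (BPath κ z) :=
  ⟨fun p q => bpath_pt_eq (funext fun k => by
    have hk : k = Fin.last 0 := Fin.ext (by have := k.isLt; omega)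
    subst hk; rw [p.last, q.last])⟩

noncomputable def bpathDefault (z : Z 0) : BPath κ z where
  pt k := cast (congrArg Z (Fin.val_eq_zero k).symm) z
  last := cast_eq rfl z
  pos k := k.elim0

noncomputable def bpathDown {n : ℕ} {z : Z (n + 1)} (p : BPath κ z) :
    Σ z' : {z' : Z n // 0 < κ n z z'}, BPath κ z'.1 :=
  ⟨⟨p.pt (Fin.last n).castSucc, by
      have h : 0 < κ n (p.pt (Fin.last (n + 1))) (p.pt (Fin.last n).castSucc) :=
        p.pos (Fin.last n)
      rwa [p.last] at h⟩,
    ⟨fun k => p.pt k.castSucc, rfl, fun k => p.pos k.castSucc⟩⟩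

theorem bpathDown_inj {n : ℕ} {z : Z (n + 1)} :
    Function.Injective (bpathDown (κ := κ) (z := z)) := by
  intro p q h
  have h2 : (fun k : Fin (n + 1) => p.pt k.castSucc)
      = fun k : Fin (n + 1) => q.pt k.castSucc :=
    congrArg (fun s : (Σ z' : {z' : Z n // 0 < κ n z z'}, BPath κ z'.1) => s.2.pt) h
  apply bpath_pt_eq
  funext i
  induction i using Fin.lastCases with
  | last => rw [p.last, q.last]
  | cast j => exact congrFun h2 j

noncomputable def bpathUp {n : ℕ} {z : Z (n + 1)} {z' : Z n} (h : 0 < κ n z z')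
    (q : BPath κ z') : BPath κ z where
  pt := Fin.snoc q.pt z
  last := Fin.snoc_last _ _
  pos k := by
    induction k using Fin.lastCases with
    | last =>
      show 0 < κ n
          (Fin.snoc (α := fun i : Fin (n + 2) => Z i) q.pt z (Fin.last (n + 1)))
          (Fin.snoc (α := fun i : Fin (n + 2) => Z i) q.pt z (Fin.castSucc (Fin.last n)))
      rw [Fin.snoc_last, Fin.snoc_castSucc, q.last]
      exact h
    | cast j =>
      show 0 < κ j
          (Fin.snoc (α := fun i : Fin (n + 2) => Z i) q.pt z (Fin.castSucc j.succ))
          (Fin.snoc (α := fun i : Fin (n + 2) => Z i) q.pt z (Fin.castSucc j.castSucc))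
      rw [Fin.snoc_castSucc, Fin.snoc_castSucc]
      exact q.pos j

theorem bpath_finite
    (hfin : ∀ (n : ℕ) (z : Z (n + 1)), {z' : Z n | 0 < κ n z z'}.Finite) :
    ∀ (n : ℕ) (z : Z n), Finite (BPath κ z)
  | 0, z => by
    haveI := bpath_subsingleton0 (κ := κ) z
    infer_instance
  | n + 1, z => by
    haveI : Finite {z' : Z n // 0 < κ n z z'} := (hfin n z).to_subtype
    haveI : ∀ z' : {z' : Z n // 0 < κ n z z'}, Finite (BPath κ z'.1) :=
      fun z' => bpath_finite hfin n z'.1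
    exact Finite.of_injective _ (bpathDown_inj (κ := κ) (z := z))

theorem bpath_nonempty [Unique (Z 0)]
    (hκ01 : ∀ (n : ℕ) (z : Z (n + 1)) (z' : Z n), κ n z z' ∈ Set.Icc (0 : ℝ) 1)
    (hrow : ∀ (n : ℕ) (z : Z (n + 1)), HasSum (fun z' : Z n => κ n z z') 1) :
    ∀ (n : ℕ) (z : Z n), Nonempty (BPath κ z)
  | 0, z => ⟨bpathDefault z⟩
  | n + 1, z => by
    have hz' : ∃ z' : Z n, 0 < κ n z z' := by
      by_contra hcon
      push_neg at hcon
      have hzero : ∀ z' : Z n, κ n z z' = 0 := fun z' =>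
        le_antisymm (hcon z') (hκ01 n z z').1
      have h1 := hrow n z
      rw [show (fun z' : Z n => κ n z z') = fun _ => (0 : ℝ) from funext hzero] at h1
      exact one_ne_zero (h1.unique hasSum_zero)
    obtain ⟨z', hz'⟩ := hz'
    obtain ⟨q⟩ := bpath_nonempty hκ01 hrow n z'
    exact ⟨bpathUp hz' q⟩

theorem kdim_pos' {n : ℕ} (z : Z n) [Finite (BPath κ z)] [Nonempty (BPath κ z)] :
    0 < kdim κ z := by
  unfold kdim
  rw [Real.sqrt_pos]
  have hpos : ∀ p : BPath κ z,
      0 < ∏ k : Fin n, (κ k (p.pt k.succ) (p.pt k.castSucc))⁻¹ :=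
    fun p => Finset.prod_pos fun k _ => inv_pos.2 (p.pos k)
  exact Summable.tsum_pos (Summable.of_finite) (fun p => (hpos p).le) (Classical.arbitrary _) (hpos _)

theorem kdim_zero' [Unique (Z 0)] (z : Z 0) : kdim κ z = 1 := by
  haveI := bpath_subsingleton0 (κ := κ) z
  haveI : Nonempty (BPath κ z) := ⟨bpathDefault z⟩
  unfold kdim
  rw [tsum_eq_single (Classical.arbitrary _)
    (fun b hb => absurd (Subsingleton.elim b _) hb)]
  simp

theorem bdim_zero' [Unique (Z 0)] (z : Z 0) : bdim κ z = 1 := by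
  haveI := bpath_subsingleton0 (κ := κ) z
  haveI : Inhabited (BPath κ z) := ⟨bpathDefault z⟩
  haveI : Unique (BPath κ z) := Unique.mk' _
  exact Nat.card_unique

theorem key_step [Unique (Z 0)]
    (κ : ∀ n, Z (n + 1) → Z n → ℝ)
    (hκ01 : ∀ (n : ℕ) (z : Z (n + 1)) (z' : Z n), κ n z z' ∈ Set.Icc (0 : ℝ) 1)
    (hrow : ∀ (n : ℕ) (z : Z (n + 1)), HasSum (fun z' : Z n => κ n z z') 1)
    (hfin : ∀ (n : ℕ) (z : Z (n + 1)), {z' : Z n | 0 < κ n z z'}.Finite)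
    (νt : ∀ n, Z n → ↥(weightGroup κ) → ℝ) (hνt : memH1T κ νt)
    (n : ℕ) (z' : Z n) :
    HasSum (fun z : Z (n + 1) => kdim κ z / (bdim κ z : ℝ) * νt (n + 1) z 1 * κ n z z')
      (kdim κ z' / (bdim κ z' : ℝ) * νt n z' 1) := by
  have hF : ∀ (m : ℕ) (w : Z m), Finite (BPath κ w) := bpath_finite hfin
  have hN : ∀ (m : ℕ) (w : Z m), Nonempty (BPath κ w) := bpath_nonempty hκ01 hrow
  have hkd : ∀ (m : ℕ) (w : Z m), 0 < kdim κ w := fun m w => by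
    haveI := hF m w; haveI := hN m w; exact kdim_pos' w
  have hbd : ∀ (m : ℕ) (w : Z m), 0 < (bdim κ w : ℝ) := fun m w => by
    haveI := hF m w; haveI := hN m w
    exact_mod_cast Nat.card_pos (α := BPath κ w)
  have hwr : ∀ z : Z (n + 1), 0 < κ n z z' → 0 < wrho κ z z' := fun z h =>
    div_pos (mul_pos (hkd _ z) h) (hkd _ z')
  classical
  set γ0 : Z (n + 1) → ↥(weightGroup κ) := fun z =>
    if h : 0 < κ n z z' then
      ⟨(Units.mk0 (wrho κ z z') (hwr z h).ne')⁻¹,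
        Subgroup.inv_mem _ (Subgroup.subset_closure ⟨n, z, z', h, rfl⟩)⟩
    else 1 with hγ0def
  have hharm := hνt.2.1 n z' 1
  set g : Z (n + 1) × ↥(weightGroup κ) → ℝ := fun p =>
    νt (n + 1) p.1 p.2 *
      mutilde κ (p.1, (p.2 : ℝˣ)) (z', ((1 : ↥(weightGroup κ)) : ℝˣ)) with hg
  have hinj : Function.Injective (fun z : Z (n + 1) => (z, γ0 z)) := fun a b h =>
    congrArg Prod.fst h
  have hvan : ∀ p, p ∉ Set.range (fun z : Z (n + 1) => (z, γ0 z)) → g p = 0 := by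
    rintro ⟨z, γ⟩ hp
    by_cases h : 0 < κ n z z'
    · have hne : γ ≠ γ0 z := by
        intro hh; exact hp ⟨z, by rw [hh]⟩
      have hm : mtilde κ (z, (γ : ℝˣ)) (z', ((1 : ↥(weightGroup κ)) : ℝˣ)) = 0 := by
        rw [mtilde, if_neg]
        rintro ⟨-, hc⟩
        apply hne
        have hc' : (((γ : ℝˣ))⁻¹ : ℝˣ) = Units.mk0 (wrho κ z z') (hwr z h).ne' :=
          Units.ext (by simpa using hc)
        have hγeq : (γ : ℝˣ) = (Units.mk0 (wrho κ z z') (hwr z h).ne')⁻¹ := by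
          rw [← hc', inv_inv]
        refine Subtype.ext ?_
        rw [hγeq, hγ0def]
        simp [dif_pos h]
      show νt (n + 1) z γ *
          mutilde κ (z, (γ : ℝˣ)) (z', ((1 : ↥(weightGroup κ)) : ℝˣ)) = 0
      rw [mutilde, hm]
      simp
    · have hm : mtilde κ (z, (γ : ℝˣ)) (z', ((1 : ↥(weightGroup κ)) : ℝˣ)) = 0 := by
        rw [mtilde, if_neg]
        exact fun hc => h hc.1
      show νt (n + 1) z γ *
          mutilde κ (z, (γ : ℝˣ)) (z', ((1 : ↥(weightGroup κ)) : ℝˣ)) = 0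
      rw [mutilde, hm]
      simp
  have hsum2 : HasSum (fun z : Z (n + 1) => g (z, γ0 z)) (νt n z' 1) :=
    (hinj.hasSum_iff hvan).2 hharm
  have hsum3 := hsum2.mul_right (kdim κ z' / (bdim κ z' : ℝ))
  have hfun : ∀ z : Z (n + 1),
      g (z, γ0 z) * (kdim κ z' / (bdim κ z' : ℝ))
        = kdim κ z / (bdim κ z : ℝ) * νt (n + 1) z 1 * κ n z z' := by
    intro z
    by_cases h : 0 < κ n z z'
    · have hγval : ((γ0 z : ℝˣ) : ℝ) = (wrho κ z z')⁻¹ := by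
        rw [hγ0def]; simp [dif_pos h]
      have hm : mtilde κ (z, (γ0 z : ℝˣ)) (z', ((1 : ↥(weightGroup κ)) : ℝˣ)) = 1 := by
        rw [mtilde, if_pos]
        refine ⟨h, ?_⟩
        rw [hγ0def]
        simp [dif_pos h]
      have hν : νt (n + 1) z (γ0 z) = wrho κ z z' * νt (n + 1) z 1 := by
        rw [hνt.2.2.1 (n + 1) z (γ0 z), hγval, inv_inv]
      simp only [hg, mutilde, hm, Nat.cast_one, one_mul]
      rw [hν, wrho]
      have h1 : kdim κ z' ≠ 0 := (hkd n z').ne'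
      have h2 : (bdim κ z : ℝ) ≠ 0 := (hbd (n + 1) z).ne'
      have h3 : (bdim κ z' : ℝ) ≠ 0 := (hbd n z').ne'
      field_simp
    · have hκ0 : κ n z z' = 0 := le_antisymm (not_lt.1 h) (hκ01 n z z').1
      have hm : ∀ u v : ℝˣ, mtilde κ (z, u) (z', v) = 0 := fun u v => by
        rw [mtilde, if_neg]
        exact fun hc => h hc.1
      simp [hg, mutilde, hm, hκ0]
  rw [show (fun z : Z (n + 1) => kdim κ z / (bdim κ z : ℝ) * νt (n + 1) z 1 * κ n z z')
      = fun z => g (z, γ0 z) * (kdim κ z' / (bdim κ z' : ℝ)) from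
        funext fun z => (hfun z).symm,
    show kdim κ z' / (bdim κ z' : ℝ) * νt n z' 1
      = νt n z' 1 * (kdim κ z' / (bdim κ z' : ℝ)) from mul_comm _ _]
  exact hsum3

end Aux

theorem stmt12     [∀ n, Countable (Z n)] [Unique (Z 0)]
    (κ : ∀ n, Z (n + 1) → Z n → ℝ)
    (hκ01 : ∀ (n : ℕ) (z : Z (n + 1)) (z' : Z n), κ n z z' ∈ Set.Icc (0 : ℝ) 1)
    (hrow : ∀ (n : ℕ) (z : Z (n + 1)), HasSum (fun z' : Z n => κ n z z') 1)
    (hsupp : ∀ (n : ℕ) (z' : Z n), ∃ z : Z (n + 1), 0 < κ n z z')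
    (hfin : ∀ (n : ℕ) (z : Z (n + 1)), {z' : Z n | 0 < κ n z z'}.Finite)
    (νt : ∀ n, Z n → ↥(weightGroup κ) → ℝ) (hνt : memH1T κ νt) (n : ℕ) :
    HasSum (fun z : Z n => kdim κ z / (bdim κ z : ℝ) * νt n z 1) 1 :=  by
  have hF : ∀ (m : ℕ) (w : Z m), Finite (BPath κ w) := bpath_finite hfin
  have hN : ∀ (m : ℕ) (w : Z m), Nonempty (BPath κ w) := bpath_nonempty hκ01 hrow
  have hfnn : ∀ (m : ℕ) (z : Z m), 0 ≤ kdim κ z / (bdim κ z : ℝ) * νt m z 1 := fun m z =>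
    mul_nonneg (div_nonneg (Real.sqrt_nonneg _) (Nat.cast_nonneg _)) (hνt.1 m z 1)
  have hkey := key_step κ hκ01 hrow hfin νt hνt
  have hE : ∀ m : ℕ,
      ∑' z : Z m, ENNReal.ofReal (kdim κ z / (bdim κ z : ℝ) * νt m z 1) = 1 := by
    intro m
    induction m with
    | zero =>
      rw [tsum_eq_single default (fun b hb => absurd (Unique.eq_default b) hb)]
      rw [kdim_zero' default, bdim_zero' (κ := κ) default, hνt.2.2.2]
      norm_num
    | succ m ih =>
      have hrowE : ∀ z : Z (m + 1), ∑' z'' : Z m, ENNReal.ofReal (κ m z z'') = 1 := by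
        intro z
        rw [← ENNReal.ofReal_tsum_of_nonneg (fun z'' => (hκ01 m z z'').1)
          (hrow m z).summable, (hrow m z).tsum_eq, ENNReal.ofReal_one]
      have h1 : ∀ z'' : Z m,
          ENNReal.ofReal (kdim κ z'' / (bdim κ z'' : ℝ) * νt m z'' 1)
            = ∑' z : Z (m + 1),
                ENNReal.ofReal (kdim κ z / (bdim κ z : ℝ) * νt (m + 1) z 1) *
                  ENNReal.ofReal (κ m z z'') := by
        intro z''
        rw [← (hkey m z'').tsum_eq,
          ENNReal.ofReal_tsum_of_nonneg
            (fun z => mul_nonneg (hfnn _ z) (hκ01 m z z'').1) (hkey m z'').summable]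
        exact tsum_congr fun z => ENNReal.ofReal_mul (hfnn _ z)
      rw [← ih, tsum_congr h1, ENNReal.tsum_comm]
      refine tsum_congr fun z => ?_
      rw [ENNReal.tsum_mul_left, hrowE z, mul_one]
  have hsummable : Summable (fun z : Z n => kdim κ z / (bdim κ z : ℝ) * νt n z 1) := by
    have ht : ∑' z : Z n, ENNReal.ofReal (kdim κ z / (bdim κ z : ℝ) * νt n z 1) ≠ ⊤ := by
      rw [hE n]; exact ENNReal.one_ne_top
    refine (ENNReal.summable_toReal ht).congr fun z => ?_
    exact ENNReal.toReal_ofReal (hfnn n z)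
  have htsum : ∑' z : Z n, (kdim κ z / (bdim κ z : ℝ) * νt n z 1) = 1 := by
    calc ∑' z : Z n, (kdim κ z / (bdim κ z : ℝ) * νt n z 1)
        = ∑' z : Z n, (ENNReal.ofReal (kdim κ z / (bdim κ z : ℝ) * νt n z 1)).toReal :=
          tsum_congr fun z => (ENNReal.toReal_ofReal (hfnn n z)).symm
      _ = (∑' z : Z n, ENNReal.ofReal (kdim κ z / (bdim κ z : ℝ) * νt n z 1)).toReal :=
          (ENNReal.tsum_toReal_eq (fun z => ENNReal.ofReal_ne_top)).symm
      _ = 1 := by rw [hE n]; simp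
  exact htsum ▸ hsummable.hasSum
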